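/- arXiv:2108.05831 — 2 statements merged into one kernel-verified Lean document; each statement's English description precedes it below -/
import Mathlib

section
/- For every γ in the Gårding cone Γ_k = {λ ∈ ℝⁿ : σⱼ(λ) > 0 for all j = 1,…,k} and every index i ∈ {1,…,n}, one has σ_{k−1,i}(γ) > 0, where σ_{k−1,i}(γ) = σ_{k−1}(γ with the i-th coordinate replaced by 0). -/
/-- The `j`-th elementary symmetric polynomial of `x : Fin n → ℝ`. -/
def esymm (n j : ℕ) (x : Fin n → ℝ) : ℝ :=
  ∑ s ∈ Finset.powersetCard j (Finset.univ : Finset (Fin n)), ∏ i ∈ s, x i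

/-!
Induction on `k`, and for fixed `k` on `#A`, where `B = A.erase i`. Adding a constant `t ≥ 0` to
every coordinate preserves `Γ_k`, since `σ_m(x + t) = ∑_q C(#A - q, m - q) t^(m-q) σ_q(x)`.
If `σ_{k+1}(B; x) ≤ 0`, shift `x` to some `ν = x + t` with `σ_{k+1}(B; ν) = 0` (intermediate
value theorem). Then `σ_{k+2}(B; ν) = σ_{k+2}(A; ν) > 0`, and by induction on `#A` (and a limit
`ε → 0⁺`) every `σ_{k+1}(B \ {j}; ν) ≥ 0`. These sum to `(#B - k - 1) σ_{k+1}(B; ν) = 0`, so they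
all vanish, and then `(k + 2) σ_{k+2}(B; ν) = ∑_j ν_j σ_{k+1}(B \ {j}; ν) = 0`, a contradiction.
-/

open Finset

section Esymm

variable {ι : Type*}

def esymmOn (A : Finset ι) (j : ℕ) (x : ι → ℝ) : ℝ :=
  ∑ s ∈ A.powersetCard j, ∏ a ∈ s, x a

/-- The Gårding cone `Γ_k` of `ℝ^A`; including `j = 0` changes nothing since `σ_0 = 1`. -/
def gardingCone (A : Finset ι) (k : ℕ) : Set (ι → ℝ) :=
  {x | ∀ j ≤ k, 0 < esymmOn A j x}

@[simp]
theorem esymmOn_zero (A : Finset ι) (x : ι → ℝ) : esymmOn A 0 x = 1 := by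
  simp [esymmOn]

theorem esymmOn_eq_zero_of_card_lt {A : Finset ι} {j : ℕ} (h : #A < j) (x : ι → ℝ) :
    esymmOn A j x = 0 := by
  simp [esymmOn, powersetCard_eq_empty.2 h]

theorem le_card_of_esymmOn_ne_zero {A : Finset ι} {j : ℕ} {x : ι → ℝ} (h : esymmOn A j x ≠ 0) :
    j ≤ #A :=
  not_lt.1 fun hlt => h (esymmOn_eq_zero_of_card_lt hlt x)

theorem esymmOn_congr {A : Finset ι} {x y : ι → ℝ} (j : ℕ) (h : ∀ a ∈ A, x a = y a) :
    esymmOn A j x = esymmOn A j y :=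
  sum_congr rfl fun _ hs => prod_congr rfl fun a ha => h a ((mem_powersetCard.1 hs).1 ha)

theorem continuous_esymmOn (A : Finset ι) (j : ℕ) : Continuous (esymmOn A j) :=
  continuous_finsetSum _ fun _ _ => continuous_finsetProd _ fun a _ => continuous_apply a

theorem gardingCone_mono (A : Finset ι) {k l : ℕ} (hkl : k ≤ l) :
    gardingCone A l ⊆ gardingCone A k :=
  fun _ hx j hj => hx j (hj.trans hkl)

theorem mem_gardingCone_succ {A : Finset ι} {k : ℕ} {x : ι → ℝ} :
    x ∈ gardingCone A (k + 1) ↔ x ∈ gardingCone A k ∧ 0 < esymmOn A (k + 1) x := by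
  simp only [gardingCone, Set.mem_ofPred_eq, Nat.le_succ_iff]
  constructor
  · exact fun h => ⟨fun j hj => h j (.inl hj), h _ (.inr rfl)⟩
  · rintro ⟨h, hk⟩ j (hj | rfl)
    exacts [h j hj, hk]

theorem sum_powersetCard_sum_powersetCard [DecidableEq ι] {β : Type*} [AddCommMonoid β]
    (A : Finset ι) {q j : ℕ} (hqj : q ≤ j) (g : Finset ι → β) :
    ∑ s ∈ A.powersetCard j, ∑ u ∈ s.powersetCard q, g u =
      (#A - q).choose (j - q) • ∑ u ∈ A.powersetCard q, g u := by
  rw [sum_comm' (t' := A.powersetCard q) (s' := fun u => (A.powersetCard j).filter (u ⊆ ·)),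
    smul_sum]
  · refine sum_congr rfl fun u hu => ?_
    obtain ⟨huA, hu⟩ := mem_powersetCard.1 hu
    rw [sum_const, card_filter_powersetCard_subset u A j huA (hu ▸ hqj), hu]
  · intro s u
    simp only [mem_powersetCard, mem_filter]
    exact ⟨fun ⟨hs, hus, hu⟩ => ⟨⟨hs, hus⟩, hus.trans hs.1, hu⟩,
      fun ⟨⟨hs, hus⟩, _, hu⟩ => ⟨hs, hus, hu⟩⟩

theorem esymmOn_add_const (A : Finset ι) (j : ℕ) (x : ι → ℝ) (t : ℝ) :
    esymmOn A j (fun a => x a + t) =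
      ∑ q ∈ range (j + 1), ((#A - q).choose (j - q) : ℝ) * t ^ (j - q) * esymmOn A q x := by
  classical
  have hexpand : ∀ s ∈ A.powersetCard j, ∏ a ∈ s, (x a + t) =
      ∑ q ∈ range (j + 1), ∑ u ∈ s.powersetCard q, (∏ a ∈ u, x a) * t ^ (j - q) := by
    intro s hs
    obtain ⟨-, hs⟩ := mem_powersetCard.1 hs
    rw [prod_add, sum_powerset, hs]
    refine sum_congr rfl fun q _ => sum_congr rfl fun u hu => ?_
    obtain ⟨hus, hu⟩ := mem_powersetCard.1 hu
    rw [prod_const, card_sdiff_of_subset hus, hs, hu]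
  rw [esymmOn, sum_congr rfl hexpand, sum_comm]
  refine sum_congr rfl fun q hq => ?_
  rw [sum_powersetCard_sum_powersetCard A (Nat.lt_succ_iff.1 (mem_range.1 hq)), esymmOn,
    nsmul_eq_mul, ← sum_mul, mul_assoc, mul_comm (t ^ _)]

theorem esymmOn_add_const_ge {A : Finset ι} {m : ℕ} (hm : 1 ≤ m) {x : ι → ℝ}
    (hx : ∀ q < m, 0 ≤ esymmOn A q x) {t : ℝ} (ht : 0 ≤ t) :
    ((#A).choose m : ℝ) * t ^ m + esymmOn A m x ≤ esymmOn A m (fun a => x a + t) := by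
  have hpair : ({0, m} : Finset ℕ) ⊆ range (m + 1) := by
    simp [insert_subset_iff]
  rw [esymmOn_add_const]
  refine le_trans (le_of_eq ?_) (sum_le_sum_of_subset_of_nonneg hpair fun q hq hq' => ?_)
  · simp [sum_pair (by omega : 0 ≠ m)]
  · have hqm : q < m := by simp at hq hq'; omega
    exact mul_nonneg (by positivity) (hx q hqm)

theorem add_const_mem_gardingCone {A : Finset ι} {k : ℕ} {x : ι → ℝ} (hx : x ∈ gardingCone A k)
    {t : ℝ} (ht : 0 ≤ t) : (fun a => x a + t) ∈ gardingCone A k := by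
  intro j hj
  rcases j.eq_zero_or_pos with rfl | hj0
  · simp
  · calc 0 < ((#A).choose j : ℝ) * t ^ j + esymmOn A j x := by
          have := hx j hj
          positivity
      _ ≤ _ := esymmOn_add_const_ge hj0 (fun q hq => (hx q (by omega)).le) ht

theorem add_const_mem_gardingCone_of_nonneg {A : Finset ι} {k : ℕ} (hk : k ≤ #A) {x : ι → ℝ}
    (hx : ∀ j ≤ k, 0 ≤ esymmOn A j x) {t : ℝ} (ht : 0 < t) :
    (fun a => x a + t) ∈ gardingCone A k := by
  intro j hj
  rcases j.eq_zero_or_pos with rfl | hj0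
  · simp
  · calc 0 < ((#A).choose j : ℝ) * t ^ j + esymmOn A j x := by
          have := Nat.choose_pos (hj.trans hk)
          have := hx j hj
          positivity
      _ ≤ _ := esymmOn_add_const_ge hj0 (fun q hq => hx q (by omega)) ht.le

theorem esymmOn_nonneg_of_forall_add_const_pos {A : Finset ι} {j : ℕ} {x : ι → ℝ}
    (h : ∀ ε > 0, 0 < esymmOn A j (fun a => x a + ε)) : 0 ≤ esymmOn A j x := by
  have hcont : Continuous fun ε : ℝ => esymmOn A j (fun a => x a + ε) :=
    (continuous_esymmOn A j).comp (continuous_pi fun a => continuous_const.add continuous_id)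
  have hlim := (hcont.tendsto 0).mono_left (nhdsWithin_le_nhds (s := Set.Ioi 0))
  simp only [add_zero] at hlim
  exact ge_of_tendsto hlim (eventually_nhdsWithin_of_forall fun ε hε => (h ε hε).le)

theorem exists_esymmOn_add_const_eq_zero {A : Finset ι} {m : ℕ} (hm : 1 ≤ m) (hmA : m ≤ #A)
    {x : ι → ℝ} (hx : ∀ q < m, 0 ≤ esymmOn A q x) (h : esymmOn A m x ≤ 0) :
    ∃ t, 0 ≤ t ∧ esymmOn A m (fun a => x a + t) = 0 := by
  set T := 1 - esymmOn A m x
  have hT : 1 ≤ T := by linarith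
  have hpos : 0 < esymmOn A m (fun a => x a + T) :=
    calc 0 < T + esymmOn A m x := by linarith
      _ ≤ ((#A).choose m : ℝ) * T ^ m + esymmOn A m x := by
          have : (1 : ℝ) ≤ (#A).choose m := by exact_mod_cast Nat.choose_pos hmA
          nlinarith [le_self_pow₀ hT (by omega : m ≠ 0)]
      _ ≤ _ := esymmOn_add_const_ge hm hx (by linarith)
  have hcont : Continuous fun t : ℝ => esymmOn A m (fun a => x a + t) :=
    (continuous_esymmOn A m).comp (continuous_pi fun a => continuous_const.add continuous_id)
  have hzero :
      (0 : ℝ) ∈ Set.Icc (esymmOn A m (fun a => x a + 0)) (esymmOn A m (fun a => x a + T)) := by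
    simpa using ⟨h, hpos.le⟩
  obtain ⟨t, ht, hzero⟩ := intermediate_value_Icc (by linarith) hcont.continuousOn hzero
  exact ⟨t, ht.1, hzero⟩

variable [DecidableEq ι]

theorem esymmOn_insert {A : Finset ι} {i : ι} (hi : i ∉ A) (j : ℕ) (x : ι → ℝ) :
    esymmOn (insert i A) (j + 1) x = esymmOn A (j + 1) x + x i * esymmOn A j x := by
  have hiA : ∀ s ∈ A.powersetCard j, i ∉ s := fun s hs his => hi ((mem_powersetCard.1 hs).1 his)
  rw [esymmOn, powersetCard_succ_insert hi, sum_union, sum_image, esymmOn, esymmOn, mul_sum]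
  · exact congrArg _ (sum_congr rfl fun s hs => prod_insert (hiA s hs))
  · exact insert_erase_invOn.2.injOn.mono fun s hs => hiA s hs
  · refine disjoint_left.2 fun s hs hs' => ?_
    obtain ⟨u, -, rfl⟩ := mem_image.1 hs'
    exact hi ((mem_powersetCard.1 hs).1 (mem_insert_self i u))

theorem esymmOn_succ_of_mem {A : Finset ι} {i : ι} (hi : i ∈ A) (j : ℕ) (x : ι → ℝ) :
    esymmOn A (j + 1) x = esymmOn (A.erase i) (j + 1) x + x i * esymmOn (A.erase i) j x := by
  conv_lhs => rw [← insert_erase hi]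
  exact esymmOn_insert (notMem_erase i A) j x

theorem esymmOn_update_zero {A : Finset ι} {i : ι} (hi : i ∈ A) (j : ℕ) (x : ι → ℝ) :
    esymmOn A j (Function.update x i 0) = esymmOn (A.erase i) j x := by
  cases j with
  | zero => simp
  | succ j =>
    rw [esymmOn_succ_of_mem hi, Function.update_self, zero_mul, add_zero]
    exact esymmOn_congr _ fun a ha => Function.update_of_ne (ne_of_mem_erase ha) _ _

theorem sum_esymmOn_erase (A : Finset ι) (j : ℕ) (x : ι → ℝ) :
    ∑ i ∈ A, esymmOn (A.erase i) j x = (#A - j : ℕ) * esymmOn A j x := by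
  have hswap : ∑ i ∈ A, esymmOn (A.erase i) j x =
      ∑ s ∈ A.powersetCard j, ∑ i ∈ A \ s, ∏ a ∈ s, x a := by
    refine sum_comm' fun i s => ?_
    simp only [mem_powersetCard, mem_sdiff, subset_erase]
    tauto
  rw [hswap, esymmOn, mul_sum]
  refine sum_congr rfl fun s hs => ?_
  obtain ⟨hsA, hs⟩ := mem_powersetCard.1 hs
  rw [sum_const, card_sdiff_of_subset hsA, hs, nsmul_eq_mul]

theorem sum_mul_esymmOn_erase (A : Finset ι) (j : ℕ) (x : ι → ℝ) :
    ∑ i ∈ A, x i * esymmOn (A.erase i) j x = (j + 1) * esymmOn A (j + 1) x := by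
  rcases lt_or_ge #A (j + 1) with hA | hA
  · rw [esymmOn_eq_zero_of_card_lt hA, mul_zero]
    refine sum_eq_zero fun i hi => ?_
    have hAi : #(A.erase i) < j := by
      have := card_pos.2 ⟨i, hi⟩
      rw [card_erase_of_mem hi]
      omega
    rw [esymmOn_eq_zero_of_card_lt hAi, mul_zero]
  · have hsucc : ∀ i ∈ A, x i * esymmOn (A.erase i) j x =
        esymmOn A (j + 1) x - esymmOn (A.erase i) (j + 1) x := fun i hi => by
      rw [esymmOn_succ_of_mem hi]; ring
    rw [sum_congr rfl hsucc, sum_sub_distrib, sum_const, sum_esymmOn_erase, nsmul_eq_mul,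
      Nat.cast_sub hA]
    push_cast
    ring

theorem esymmOn_succ_eq_zero {A : Finset ι} {m : ℕ} {x : ι → ℝ} (hm : esymmOn A m x = 0)
    (herase : ∀ i ∈ A, 0 ≤ esymmOn (A.erase i) m x) : esymmOn A (m + 1) x = 0 := by
  have hsum : ∑ i ∈ A, esymmOn (A.erase i) m x = 0 := by
    rw [sum_esymmOn_erase, hm, mul_zero]
  have hzero := (sum_eq_zero_iff_of_nonneg herase).1 hsum
  have h := sum_mul_esymmOn_erase A m x
  rw [sum_eq_zero fun i hi => by rw [hzero i hi, mul_zero]] at h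
  exact (mul_eq_zero.1 h.symm).resolve_left (by positivity)

theorem esymmOn_erase_succ_pos {A : Finset ι} {k : ℕ} {x : ι → ℝ}
    (hx : x ∈ gardingCone A (k + 2)) {i : ι} (hi : i ∈ A)
    (ihk : ∀ y ∈ gardingCone A (k + 1), y ∈ gardingCone (A.erase i) k)
    (ihA : ∀ j ∈ A.erase i, ∀ y ∈ gardingCone (A.erase i) (k + 2),
      y ∈ gardingCone ((A.erase i).erase j) (k + 1)) :
    0 < esymmOn (A.erase i) (k + 1) x := by
  set B := A.erase i with hB
  by_contra! hneg
  have hxB : x ∈ gardingCone B k := ihk x (gardingCone_mono A (by omega) hx)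
  have hkB : k + 1 ≤ #B := by
    have := le_card_of_esymmOn_ne_zero (hx (k + 2) le_rfl).ne'
    rw [card_erase_of_mem hi]
    omega
  obtain ⟨t, ht, hzero⟩ :=
    exists_esymmOn_add_const_eq_zero (by omega) hkB (fun q hq => (hxB q (by omega)).le) hneg
  set ν := fun a => x a + t
  have hνA : ν ∈ gardingCone A (k + 2) := add_const_mem_gardingCone hx ht
  have hνB : ν ∈ gardingCone B k := ihk ν (gardingCone_mono A (by omega) hνA)
  have hpos : 0 < esymmOn B (k + 2) ν := by
    have h := hνA (k + 2) le_rfl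
    rwa [esymmOn_succ_of_mem hi, ← hB, hzero, mul_zero, add_zero] at h
  have herase : ∀ j ∈ B, 0 ≤ esymmOn (B.erase j) (k + 1) ν := by
    intro j hj
    refine esymmOn_nonneg_of_forall_add_const_pos fun ε hε => ?_
    refine ihA j hj _ (add_const_mem_gardingCone_of_nonneg ?_ (fun q hq => ?_) hε) (k + 1) le_rfl
    · exact le_card_of_esymmOn_ne_zero hpos.ne'
    · rcases (by omega : q ≤ k ∨ q = k + 1 ∨ q = k + 2) with hq | rfl | rfl
      exacts [(hνB q hq).le, hzero.ge, hpos.le]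
  exact hpos.ne' (esymmOn_succ_eq_zero hzero herase)

theorem erase_mem_gardingCone {A : Finset ι} {k : ℕ} {x : ι → ℝ} (hx : x ∈ gardingCone A (k + 1))
    {i : ι} (hi : i ∈ A) : x ∈ gardingCone (A.erase i) k := by
  induction k generalizing A x i with
  | zero => intro j hj; simp [Nat.le_zero.1 hj]
  | succ k ihk =>
    induction A using Finset.strongInduction generalizing x i with
    | H A ihA =>
      exact mem_gardingCone_succ.2 ⟨ihk (gardingCone_mono A (by omega) hx) hi,
        esymmOn_erase_succ_pos hx hi (fun y hy => ihk hy hi)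
          (fun j hj y hy => ihA _ (erase_ssubset hi) hy hj)⟩

end Esymm

theorem stmt_12_general (n k : ℕ) (γ : Fin n → ℝ)
    (hγ : ∀ j, 1 ≤ j → j ≤ k → 0 < esymm n j γ) (i : Fin n) :
    0 < esymm n (k - 1) (Function.update γ i 0) := by
  rcases k with _ | k
  · simp [esymm]
  have hγ : γ ∈ gardingCone univ (k + 1) := fun j hj => by
    rcases j.eq_zero_or_pos with rfl | hj0
    exacts [by simp, hγ j hj0 hj]
  show 0 < esymmOn univ k (Function.update γ i 0)
  rw [esymmOn_update_zero (mem_univ i)]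
  exact erase_mem_gardingCone hγ (mem_univ i) k le_rfl

theorem stmt_12 (n k : ℕ) (hk2 : 2 ≤ k) (hkn : k ≤ n) (γ : Fin n → ℝ)
    (hγ : ∀ j, 1 ≤ j → j ≤ k → 0 < esymm n j γ) (i : Fin n) :
    0 < esymm n (k - 1) (Function.update γ i 0) :=
  stmt_12_general n k γ hγ i
end

section
/- Marcus's inequality: for symmetric n×n matrices X and M with X positive semi-definite, trace(XM) ≥ min over permutations p of {1,…,n} of Σ_{i=1}^n λᵢ(M)·λ_{p(i)}(X), where λᵢ denotes eigenvalues counted with multiplicity. -/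
/-!
Diagonalize `X = V diag(a) Vᵀ` and `M = U diag(b) Uᵀ` with `V`, `U` orthogonal and `a`, `b` the
eigenvalues. Then `tr(XM) = ∑ₖₗ aₖ bₗ Wₖₗ²` with `W = VᵀU`, and since `W` is orthogonal the matrix
`(Wₖₗ²)` is doubly stochastic. This sum is linear in that matrix, so by Birkhoff's theorem it is
bounded below by its minimum over permutation matrices, which is the minimum over `p` of
`∑ᵢ bᵢ a_{p(i)}`.
-/

open Matrix

variable {ι : Type*} [Fintype ι] [DecidableEq ι]

theorem entrywise_sq_mem_doublyStochastic {W : Matrix ι ι ℝ} (hW : W ∈ unitaryGroup ι ℝ) :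
    of (fun k l => W k l ^ 2) ∈ doublyStochastic ℝ ι := by
  rw [mem_doublyStochastic_iff_sum]
  refine ⟨fun _ _ => sq_nonneg _, fun k => ?_, fun l => ?_⟩
  · simpa [of_apply, mul_apply, one_apply, sq] using
      congrArg (fun A => A k k) (mem_unitaryGroup_iff.mp hW)
  · simpa [of_apply, mul_apply, one_apply, sq, mul_comm] using
      congrArg (fun A => A l l) (mem_unitaryGroup_iff'.mp hW)

theorem trace_conj_diagonal_mul_conj_diagonal (a b : ι → ℝ) (V U : Matrix ι ι ℝ) :
    (V * diagonal a * star V * (U * diagonal b * star U)).trace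
      = ∑ k, ∑ l, a k * b l * (star V * U) k l ^ 2 := by
  have h_cyclic : (V * diagonal a * star V * (U * diagonal b * star U)).trace
      = (diagonal a * (star V * U * diagonal b * star (star V * U))).trace := by
    rw [star_mul, star_star, mul_assoc, mul_assoc, trace_mul_comm]
    simp only [mul_assoc]
  rw [h_cyclic]
  simp only [trace, diag, diagonal_mul, mul_apply (M := star V * U * diagonal b), mul_diagonal,
    star_apply, star_trivial, Finset.mul_sum]
  exact Finset.sum_congr rfl fun k _ => Finset.sum_congr rfl fun l _ => by ring

theorem iInf_sum_mul_perm_le_of_mem_doublyStochastic (a b : ι → ℝ) {S : Matrix ι ι ℝ}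
    (hS : S ∈ doublyStochastic ℝ ι) :
    ⨅ p : Equiv.Perm ι, ∑ i, b i * a (p i) ≤ ∑ k, ∑ l, a k * b l * S k l := by
  set f : Matrix ι ι ℝ → ℝ := fun A => ∑ k, ∑ l, a k * b l * A k l
  have hf : IsLinearMap ℝ f :=
    ⟨fun A B => by simp [f, mul_add, Finset.sum_add_distrib],
     fun c A => by simp [f, Finset.mul_sum, mul_left_comm]⟩
  have h_perm : ∀ σ : Equiv.Perm ι, ⨅ p : Equiv.Perm ι, ∑ i, b i * a (p i) ≤ f (σ.permMatrix ℝ) := by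
    intro σ
    -- `σ.permMatrix` has its ones at the entries `(k, σ k)`, hence the inverse below.
    have h_eval : f (σ.permMatrix ℝ) = ∑ i, b i * a (σ⁻¹ i) := by
      rw [← Equiv.sum_comp σ]
      simp [f, Equiv.Perm.permMatrix, PEquiv.toMatrix_apply, mul_comm]
    exact h_eval ▸ ciInf_le (Finite.bddBelow_range _) σ⁻¹
  have hS_hull : S ∈ convexHull ℝ {σ.permMatrix ℝ | σ : Equiv.Perm ι} := by
    rw [← doublyStochastic_eq_convexHull_permMatrix]
    exact hS
  exact convexHull_min (by rintro _ ⟨σ, rfl⟩; exact h_perm σ) (convex_halfSpace_ge hf _) hS_hull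

theorem stmt_16 (n : ℕ) (X M : Matrix (Fin n) (Fin n) ℝ)
    (hX : X.PosSemidef) (hM : M.IsHermitian) :
    (⨅ p : Equiv.Perm (Fin n), ∑ i, hM.eigenvalues i * hX.1.eigenvalues (p i))
      ≤ (X * M).trace := by
  set V : Matrix (Fin n) (Fin n) ℝ := (hX.1.eigenvectorUnitary : Matrix (Fin n) (Fin n) ℝ)
  set U : Matrix (Fin n) (Fin n) ℝ := (hM.eigenvectorUnitary : Matrix (Fin n) (Fin n) ℝ)
  have hW : star V * U ∈ unitaryGroup (Fin n) ℝ :=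
    (star hX.1.eigenvectorUnitary * hM.eigenvectorUnitary).2
  have hX_diag : X = V * diagonal hX.1.eigenvalues * star V := by
    simpa using hX.1.spectral_theorem
  have hM_diag : M = U * diagonal hM.eigenvalues * star U := by
    simpa using hM.spectral_theorem
  have h_trace : (X * M).trace
      = ∑ k, ∑ l, hX.1.eigenvalues k * hM.eigenvalues l * (star V * U) k l ^ 2 := by
    conv_lhs => rw [hX_diag, hM_diag]
    exact trace_conj_diagonal_mul_conj_diagonal _ _ V U
  exact h_trace ▸
    iInf_sum_mul_perm_le_of_mem_doublyStochastic _ _ (entrywise_sq_mem_doublyStochastic hW)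
end
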